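/- arXiv:2303.03841 — 2 statements merged into one kernel-verified Lean document; each statement's English description precedes it below -/
import Mathlib

section
/- Let p > 0, u, M, ρ be real numbers. In (r, z, θ) components, let R(ρ) be the 3×3 rotation matrix with rows (cos ρ, sin ρ, 0), (−sin ρ, cos ρ, 0), (0, 0, 1), let D = diag(σ'₃, σ'₁, σ'₃) with σ'₁ = p·(1 + (2/3)·M) and σ'₃ = p·(1 − M/3), and let the total stress tensor be σ = R(ρ)·D·R(ρ)ᵀ + u·I. Let n = (−√3/2, 1/2, 0) be the unit normal to the face of a cone with semi-apex angle 30°, let t = σ·n be the traction on the face, and define the cone resistance q_c = 2·t_z (the factor 2 = 1/cos 60° being the ratio of cone face area to projected base area). Then q_c = p + p·M·(1/6 + cos(2ρ)/2 − (√3/2)·sin(2ρ)) + u. -/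
open Matrix Real

theorem cone_resistance_from_rotated_triaxial_state
    (p u M ρ : ℝ) (hp : p > 0)
    (σ1 σ3 : ℝ) (hσ1 : σ1 = p * (1 + (2 / 3) * M)) (hσ3 : σ3 = p * (1 - M / 3))
    (R D σ : Matrix (Fin 3) (Fin 3) ℝ)
    (hR : R = !![Real.cos ρ, Real.sin ρ, 0; -Real.sin ρ, Real.cos ρ, 0; 0, 0, 1])
    (hD : D = Matrix.diagonal ![σ3, σ1, σ3])
    (hσ : σ = R * D * Rᵀ + u • (1 : Matrix (Fin 3) (Fin 3) ℝ))
    (n : Fin 3 → ℝ) (hn : n = ![-(Real.sqrt 3) / 2, 1 / 2, 0])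
    (t : Fin 3 → ℝ) (ht : t = σ.mulVec n)
    (qc : ℝ) (hqc : qc = 2 * t 1) :
    qc = p + p * M * (1 / 6 + Real.cos (2 * ρ) / 2 - (Real.sqrt 3 / 2) * Real.sin (2 * ρ)) + u := by
  subst hσ1 hσ3 hR hD hσ hn ht hqc
  simp [Matrix.mulVec, Matrix.mul_apply, Matrix.vecMul, dotProduct, Fin.sum_univ_three,
    Matrix.diagonal, Matrix.one_apply, Matrix.vecHead, Matrix.vecTail, Matrix.transpose_apply]
  rw [Real.cos_two_mul, Real.sin_two_mul]
  linear_combination (p * (1 - M / 3)) * Real.sin_sq_add_cos_sq ρ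
end

section
/- Let M > 0 and define c_q(ρ) = (M + 3M·cos(2ρ) − 3√3·M·sin(2ρ) + 6)/(4M + 6). Then c_q is strictly increasing on the interval [2π/3, 5π/6]; consequently c_q(ρ) > 1 for every ρ in (2π/3, 5π/6]. That is, rough cones, for which the major principal stress direction makes an angle ρ > 120° with the vertical, have correction factor larger than 1. -/
private lemma cq_cos_two_pi_sub (x : ℝ) : Real.cos (2 * Real.pi - x) = Real.cos x := by
  rw [Real.cos_sub, Real.cos_two_pi, Real.sin_two_pi]; ring

theorem correction_factor_rough_cone (M : ℝ) (hM : M > 0) :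
    StrictMonoOn
      (fun ρ : ℝ =>
        (M + 3 * M * Real.cos (2 * ρ) - 3 * Real.sqrt 3 * M * Real.sin (2 * ρ) + 6) /
          (4 * M + 6))
      (Set.Icc (2 * Real.pi / 3) (5 * Real.pi / 6)) ∧
    ∀ ρ ∈ Set.Ioc (2 * Real.pi / 3) (5 * Real.pi / 6),
      (M + 3 * M * Real.cos (2 * ρ) - 3 * Real.sqrt 3 * M * Real.sin (2 * ρ) + 6) /
          (4 * M + 6) > 1 := by
  have hpi := Real.pi_pos
  have hden : (0:ℝ) < 4 * M + 6 := by linarith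
  have hnum : ∀ ρ : ℝ,
      M + 3 * M * Real.cos (2 * ρ) - 3 * Real.sqrt 3 * M * Real.sin (2 * ρ) + 6
        = M + 6 * M * Real.cos (2 * ρ + Real.pi / 3) + 6 := by
    intro ρ
    rw [Real.cos_add, Real.cos_pi_div_three, Real.sin_pi_div_three]
    ring
  have key : ∀ a b : ℝ, 2 * Real.pi / 3 ≤ a → b ≤ 5 * Real.pi / 6 → a < b →
      Real.cos (2 * a + Real.pi / 3) < Real.cos (2 * b + Real.pi / 3) := by
    intro a b ha hb hab
    have h1 : Real.cos (2 * a + Real.pi / 3)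
        = Real.cos (2 * Real.pi - (2 * a + Real.pi / 3)) := (cq_cos_two_pi_sub _).symm
    have h2 : Real.cos (2 * b + Real.pi / 3)
        = Real.cos (2 * Real.pi - (2 * b + Real.pi / 3)) := (cq_cos_two_pi_sub _).symm
    rw [h1, h2]
    apply Real.strictAntiOn_cos
    · constructor <;> [linarith; linarith]
    · constructor <;> [linarith; linarith]
    · linarith
  have hmono : StrictMonoOn
      (fun ρ : ℝ =>
        (M + 3 * M * Real.cos (2 * ρ) - 3 * Real.sqrt 3 * M * Real.sin (2 * ρ) + 6) /
          (4 * M + 6))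
      (Set.Icc (2 * Real.pi / 3) (5 * Real.pi / 6)) := by
    intro a ha b hb hab
    simp only
    rw [div_lt_div_iff_of_pos_right hden, hnum a, hnum b]
    have := key a b ha.1 hb.2 hab
    nlinarith
  refine ⟨hmono, ?_⟩
  intro ρ hρ
  have hval : (M + 3 * M * Real.cos (2 * (2 * Real.pi / 3)) -
      3 * Real.sqrt 3 * M * Real.sin (2 * (2 * Real.pi / 3)) + 6) / (4 * M + 6) = 1 := by
    have h43 : (2 : ℝ) * (2 * Real.pi / 3) = Real.pi + Real.pi / 3 := by ring
    rw [h43, Real.cos_add, Real.sin_add, Real.cos_pi, Real.sin_pi, Real.cos_pi_div_three, Real.sin_pi_div_three]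
    have h3 : Real.sqrt 3 * Real.sqrt 3 = 3 := Real.mul_self_sqrt (by norm_num)
    field_simp
    nlinarith
  have hlt := hmono (Set.left_mem_Icc.mpr (by linarith)) ⟨le_of_lt hρ.1, hρ.2⟩ hρ.1
  simp only at hlt
  rw [hval] at hlt
  exact hlt
end
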